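/- Let A ∈ ASM(n) and define biGr(A) to be the set of maximal elements (with respect to the Bruhat order) of the set of biGrassmannian permutations u ∈ S_n with u ≤ A. Then biGr(A) = {[i, j, r_A(i,j)]_b : (i,j) ∈ Ess(A)}. -/

import Mathlib

/-!
A biGrassmannian permutation `[i,j,r]_b` has corner sums
`min (a, b, r + (a - i)₊ + (b - j)₊)`. Hence `[i,j,r]_b ≤ A` iff `r_A(i,j) ≤ r`, and
`[i,j,r]_b ≤ [i',j',r']_b` iff `r' + (i - i')₊ + (j - j')₊ ≤ r`: the maximal biGrassmannians
below `A` are the rank conditions `r_A(i,j) ≤ r` not implied by another one. Since `r_A` is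
monotone and 1-Lipschitz in each coordinate, such a condition is tight, cannot be moved up or
left (`r_A(i-1,j) = r_A(i,j) = r_A(i,j-1)`, i.e. `(i,j) ∈ D(A)`), and cannot be moved down or
right (`(i+1,j), (i,j+1) ∉ D(A)`), and conversely: this is `(i,j) ∈ Ess(A)`.

Every biGrassmannian `u` is of this form: if `d` and `e` are the descents of `u` and `u⁻¹` and
`r = r_u(d,e)`, then `u` is increasing on `[1,d]` and `[d+1,n]` and `u⁻¹` on `[1,e]` and
`[e+1,n]`, which forces `u = [d,e,r]_b`.
-/

/-- The entry of an `n × n` integer matrix in 1-based coordinates;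
`0` outside the grid `[1,n] × [1,n]`. -/
def entry1 {n : ℕ} (A : Matrix (Fin n) (Fin n) ℤ) (i j : ℕ) : ℤ :=
  if h : 1 ≤ i ∧ i ≤ n ∧ 1 ≤ j ∧ j ≤ n then
    A ⟨i - 1, by omega⟩ ⟨j - 1, by omega⟩ else 0

/-- The corner sum `r_A(i,j) = ∑_{k ≤ i} ∑_{l ≤ j} a_{k l}` (1-based). -/
def cornerSum {n : ℕ} (A : Matrix (Fin n) (Fin n) ℤ) (i j : ℕ) : ℤ :=
  ∑ k ∈ Finset.Icc 1 i, ∑ l ∈ Finset.Icc 1 j, entry1 A k l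

/-- Partial row sum `∑_{l=1}^{j} a_{i l}`. -/
def rowPartial {n : ℕ} (A : Matrix (Fin n) (Fin n) ℤ) (i j : ℕ) : ℤ :=
  ∑ l ∈ Finset.Icc 1 j, entry1 A i l

/-- Partial column sum `∑_{k=1}^{i} a_{k j}`. -/
def colPartial {n : ℕ} (A : Matrix (Fin n) (Fin n) ℤ) (i j : ℕ) : ℤ :=
  ∑ k ∈ Finset.Icc 1 i, entry1 A k j

/-- `A` is an alternating sign matrix: every partial row and column sum is `0`
or `1`, and every full row and column sums to `1`. -/
def IsASM {n : ℕ} (A : Matrix (Fin n) (Fin n) ℤ) : Prop :=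
  (∀ i j : ℕ, rowPartial A i j = 0 ∨ rowPartial A i j = 1) ∧
  (∀ i j : ℕ, colPartial A i j = 0 ∨ colPartial A i j = 1) ∧
  (∀ i : ℕ, 1 ≤ i → i ≤ n → rowPartial A i n = 1) ∧
  (∀ j : ℕ, 1 ≤ j → j ≤ n → colPartial A n j = 1)

/-- `A` is a partial alternating sign matrix: every partial row and column sum
is `0` or `1`. -/
def IsPartialASM {n : ℕ} (A : Matrix (Fin n) (Fin n) ℤ) : Prop :=
  (∀ i j : ℕ, rowPartial A i j = 0 ∨ rowPartial A i j = 1) ∧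
  (∀ i j : ℕ, colPartial A i j = 0 ∨ colPartial A i j = 1)

/-- `(i,j)` (1-based) is in the Rothe diagram `D(A)`:
`∑_{k > i, l > j} a_{i l} a_{k j} = 1`. -/
def InDiagram {n : ℕ} (A : Matrix (Fin n) (Fin n) ℤ) (i j : ℕ) : Prop :=
  (∑ k ∈ Finset.Icc 1 n, ∑ l ∈ Finset.Icc 1 n,
    (if i < k ∧ j < l then entry1 A i l * entry1 A k j else 0)) = 1

/-- `(i,j)` is in the essential set `Ess(A)`. -/
def InEss {n : ℕ} (A : Matrix (Fin n) (Fin n) ℤ) (i j : ℕ) : Prop :=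
  InDiagram A i j ∧ ¬ InDiagram A (i + 1) j ∧ ¬ InDiagram A i (j + 1)

/-- The permutation matrix of `w` (a `1` in positions `(a, w a)`). -/
def permMatrix {n : ℕ} (w : Equiv.Perm (Fin n)) : Matrix (Fin n) (Fin n) ℤ :=
  Matrix.of fun a b => if w a = b then 1 else 0

/-- The value `w(a)` of the permutation `w` in 1-based coordinates, extended by
the identity outside `[1,n]`. -/
def pval {n : ℕ} (w : Equiv.Perm (Fin n)) (a : ℕ) : ℕ :=
  if h : 1 ≤ a ∧ a ≤ n then ((w ⟨a - 1, by omega⟩ : Fin n) : ℕ) + 1 else a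

/-- The value function (1-based) of the biGrassmannian permutation `[i,j,r]_b`. -/
def biGrFun (i j r a : ℕ) : ℕ :=
  if a ≤ r then a
  else if a ≤ i then a + (j - r)
  else if a ≤ i + j - r then a - (i - r)
  else a

/-- The permutation matrix of the biGrassmannian permutation `[i,j,r]_b ∈ S_n`. -/
def biGrMatrix (n i j r : ℕ) : Matrix (Fin n) (Fin n) ℤ :=
  Matrix.of fun a b => if biGrFun i j r ((a : ℕ) + 1) = (b : ℕ) + 1 then 1 else 0

/-- `u ∈ S_n` is the biGrassmannian permutation `[i,j,r]_b`, i.e. its values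
are given by the defining formula. -/
def IsBiGrPerm (n i j r : ℕ) (u : Equiv.Perm (Fin n)) : Prop :=
  ∀ a : ℕ, 1 ≤ a → a ≤ n → pval u a = biGrFun i j r a

/-- `(a,b)` (1-based) is in the Rothe diagram of the permutation `w`:
`w(a) > b` and `w⁻¹(b) > a`. -/
def InPermDiagram {n : ℕ} (w : Equiv.Perm (Fin n)) (a b : ℕ) : Prop :=
  1 ≤ a ∧ a ≤ n ∧ 1 ≤ b ∧ b ≤ n ∧ b < pval w a ∧ a < pval w⁻¹ b

/-- `(a,b)` is in the essential set of the permutation `w`. -/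
def InPermEss {n : ℕ} (w : Equiv.Perm (Fin n)) (a b : ℕ) : Prop :=
  InPermDiagram w a b ∧ ¬ InPermDiagram w (a + 1) b ∧ ¬ InPermDiagram w a (b + 1)

/-- `w` has a descent at (1-based) position `d`: `w(d) > w(d+1)`. -/
def HasDescentAt {n : ℕ} (w : Equiv.Perm (Fin n)) (d : ℕ) : Prop :=
  1 ≤ d ∧ d < n ∧ pval w (d + 1) < pval w d

/-- `u` is biGrassmannian: both `u` and `u⁻¹` have a unique descent. -/
def IsBiGrassmannian {n : ℕ} (u : Equiv.Perm (Fin n)) : Prop :=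
  (∃! d : ℕ, HasDescentAt u d) ∧ (∃! d : ℕ, HasDescentAt u⁻¹ d)

/-- `u ≤ v` in Bruhat order: `r_u ≥ r_v` entrywise. -/
def BruhatLE {n : ℕ} (u v : Equiv.Perm (Fin n)) : Prop :=
  ∀ a b : ℕ, cornerSum (permMatrix v) a b ≤ cornerSum (permMatrix u) a b

/-- `u ≤ A` in the ASM order: `r_u ≥ r_A` entrywise. -/
def PermLEASM {n : ℕ} (u : Equiv.Perm (Fin n))
    (A : Matrix (Fin n) (Fin n) ℤ) : Prop :=
  ∀ a b : ℕ, cornerSum A a b ≤ cornerSum (permMatrix u) a b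


open Finset

section CornerSum

variable {n : ℕ} (A : Matrix (Fin n) (Fin n) ℤ)

lemma entry1_eq_zero_of_row {i : ℕ} (h : ¬(1 ≤ i ∧ i ≤ n)) (j : ℕ) : entry1 A i j = 0 :=
  dif_neg (by tauto)

lemma entry1_eq_zero_of_col (i : ℕ) {j : ℕ} (h : ¬(1 ≤ j ∧ j ≤ n)) : entry1 A i j = 0 :=
  dif_neg (by tauto)

lemma cornerSum_zero_left (b : ℕ) : cornerSum A 0 b = 0 := by
  simp [cornerSum]

lemma cornerSum_zero_right (a : ℕ) : cornerSum A a 0 = 0 := by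
  simp [cornerSum]

lemma cornerSum_succ_left (a b : ℕ) :
    cornerSum A (a + 1) b = cornerSum A a b + rowPartial A (a + 1) b :=
  sum_Icc_succ_top (by omega) _

lemma cornerSum_succ_right (a b : ℕ) :
    cornerSum A a (b + 1) = cornerSum A a b + colPartial A a (b + 1) := by
  simp only [cornerSum, colPartial, sum_comm (s := Icc 1 a)]
  exact sum_Icc_succ_top (by omega) _

lemma cornerSum_min_left (a b : ℕ) : cornerSum A (min a n) b = cornerSum A a b := by
  refine sum_subset (Icc_subset_Icc_right (min_le_left a n)) fun k hk hk' => ?_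
  simp only [mem_Icc] at hk hk'
  exact sum_eq_zero fun l _ => entry1_eq_zero_of_row A (by omega) l

lemma rowPartial_eq_sum_filter_le (i j : ℕ) :
    rowPartial A i j = ∑ l ∈ (Icc 1 n).filter (· ≤ j), entry1 A i l := by
  refine (sum_subset (fun l => by simp only [mem_filter, mem_Icc]; omega) fun l hl hl' => ?_).symm
  simp only [mem_filter, mem_Icc] at hl hl'
  exact entry1_eq_zero_of_col A i (by omega)

lemma colPartial_eq_sum_filter_le (i j : ℕ) :
    colPartial A i j = ∑ k ∈ (Icc 1 n).filter (· ≤ i), entry1 A k j := by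
  refine (sum_subset (fun k => by simp only [mem_filter, mem_Icc]; omega) fun k hk hk' => ?_).symm
  simp only [mem_filter, mem_Icc] at hk hk'
  exact entry1_eq_zero_of_row A (by omega) j

lemma sum_filter_lt_eq_rowPartial_sub (i j : ℕ) :
    ∑ l ∈ (Icc 1 n).filter (j < ·), entry1 A i l = rowPartial A i n - rowPartial A i j := by
  rw [rowPartial_eq_sum_filter_le A i j, eq_sub_iff_add_eq, add_comm]
  simp only [← not_lt]
  exact sum_filter_not_add_sum_filter _ _ _

lemma sum_filter_lt_eq_colPartial_sub (i j : ℕ) :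
    ∑ k ∈ (Icc 1 n).filter (i < ·), entry1 A k j = colPartial A n j - colPartial A i j := by
  rw [colPartial_eq_sum_filter_le A i j, eq_sub_iff_add_eq, add_comm]
  simp only [← not_lt]
  exact sum_filter_not_add_sum_filter _ _ _

lemma inDiagram_iff_mul (i j : ℕ) :
    InDiagram A i j ↔
      (rowPartial A i n - rowPartial A i j) * (colPartial A n j - colPartial A i j) = 1 := by
  rw [InDiagram, ← sum_filter_lt_eq_rowPartial_sub, ← sum_filter_lt_eq_colPartial_sub,
    sum_filter, sum_filter, sum_mul_sum, sum_comm]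
  simp only [ite_zero_mul_ite_zero, and_comm]

end CornerSum

section PartialASM

variable {n : ℕ} {A : Matrix (Fin n) (Fin n) ℤ}

lemma le_add_sub_of_le_succ_add_one {f : ℕ → ℤ} (hf : ∀ m, f (m + 1) ≤ f m + 1) {a b : ℕ}
    (hab : a ≤ b) : f b ≤ f a + ((b - a : ℕ) : ℤ) := by
  induction b, hab using Nat.le_induction with
  | base => simp
  | succ m ham ih => have := hf m; push_cast [Nat.sub_add_comm ham] at ih ⊢; omega

namespace IsPartialASM

lemma cornerSum_succ_left_mem (hA : IsPartialASM A) (a b : ℕ) :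
    cornerSum A a b ≤ cornerSum A (a + 1) b ∧ cornerSum A (a + 1) b ≤ cornerSum A a b + 1 := by
  rw [cornerSum_succ_left]; rcases hA.1 (a + 1) b with h | h <;> omega

lemma cornerSum_succ_right_mem (hA : IsPartialASM A) (a b : ℕ) :
    cornerSum A a b ≤ cornerSum A a (b + 1) ∧ cornerSum A a (b + 1) ≤ cornerSum A a b + 1 := by
  rw [cornerSum_succ_right]; rcases hA.2 a (b + 1) with h | h <;> omega

lemma cornerSum_mono (hA : IsPartialASM A) {a a' b b' : ℕ} (ha : a ≤ a') (hb : b ≤ b') :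
    cornerSum A a b ≤ cornerSum A a' b' :=
  (monotone_nat_of_le_succ (fun m => (hA.cornerSum_succ_left_mem m b).1) ha).trans
    (monotone_nat_of_le_succ (fun m => (hA.cornerSum_succ_right_mem a' m).1) hb)

lemma cornerSum_le_add (hA : IsPartialASM A) (a b a' b' : ℕ) :
    cornerSum A a b ≤ cornerSum A a' b' + ((a - a' : ℕ) : ℤ) + ((b - b' : ℕ) : ℤ) := by
  have hrow := le_add_sub_of_le_succ_add_one (fun m => (hA.cornerSum_succ_left_mem m (max b b')).2)
    (le_max_right a a')
  have hcol := le_add_sub_of_le_succ_add_one (fun m => (hA.cornerSum_succ_right_mem a' m).2)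
    (le_max_right b b')
  have hmono := hA.cornerSum_mono (le_max_left a a') (le_max_left b b')
  omega

lemma cornerSum_nonneg (hA : IsPartialASM A) (a b : ℕ) : 0 ≤ cornerSum A a b := by
  simpa [cornerSum_zero_left] using hA.cornerSum_mono (Nat.zero_le a) le_rfl (b := b)

lemma cornerSum_le_left (hA : IsPartialASM A) (a b : ℕ) : cornerSum A a b ≤ a := by
  simpa [cornerSum_zero_left] using hA.cornerSum_le_add a b 0 b

lemma cornerSum_le_right (hA : IsPartialASM A) (a b : ℕ) : cornerSum A a b ≤ b := by
  simpa [cornerSum_zero_right] using hA.cornerSum_le_add a b a 0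

end IsPartialASM

namespace IsASM

lemma isPartialASM (hA : IsASM A) : IsPartialASM A := ⟨hA.1, hA.2.1⟩

lemma cornerSum_right_eq (hA : IsASM A) {a : ℕ} (ha : a ≤ n) : cornerSum A a n = a := by
  change ∑ k ∈ Icc 1 a, rowPartial A k n = (a : ℤ)
  rw [sum_congr rfl fun k hk => hA.2.2.1 k (mem_Icc.1 hk).1 ((mem_Icc.1 hk).2.trans ha)]
  simp

lemma le_cornerSum (hA : IsASM A) {a b : ℕ} (ha : a ≤ n) (hb : b ≤ n) :
    (a + b - n : ℤ) ≤ cornerSum A a b := by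
  have := hA.isPartialASM.cornerSum_le_add a n a b
  rw [hA.cornerSum_right_eq ha] at this
  omega

end IsASM

end PartialASM

section Diagram

variable {n : ℕ} {A : Matrix (Fin n) (Fin n) ℤ}

lemma IsASM.inDiagram_iff (hA : IsASM A) (i j : ℕ) :
    InDiagram A i j ↔ 1 ≤ i ∧ i ≤ n ∧ 1 ≤ j ∧ j ≤ n ∧
      cornerSum A (i - 1) j = cornerSum A i j ∧ cornerSum A i (j - 1) = cornerSum A i j := by
  rw [inDiagram_iff_mul]
  by_cases hi : 1 ≤ i ∧ i ≤ n
  swap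
  · have h : ∀ l, rowPartial A i l = 0 := fun l =>
      sum_eq_zero fun k _ => entry1_eq_zero_of_row A hi k
    simp only [h, sub_zero, zero_mul, zero_ne_one, false_iff]
    tauto
  by_cases hj : 1 ≤ j ∧ j ≤ n
  swap
  · have h : ∀ k, colPartial A k j = 0 := fun k =>
      sum_eq_zero fun l _ => entry1_eq_zero_of_col A l hj
    simp only [h, sub_zero, mul_zero, zero_ne_one, false_iff]
    tauto
  obtain ⟨i, rfl⟩ : ∃ i', i = i' + 1 := ⟨i - 1, by omega⟩
  obtain ⟨j, rfl⟩ : ∃ j', j = j' + 1 := ⟨j - 1, by omega⟩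
  have hrow := cornerSum_succ_left A i (j + 1)
  have hcol := cornerSum_succ_right A (i + 1) j
  rw [hA.2.2.1 _ hi.1 hi.2, hA.2.2.2 _ hj.1 hj.2, add_tsub_cancel_right, add_tsub_cancel_right]
  rcases hA.1 (i + 1) (j + 1) with hr | hr <;> rcases hA.2.1 (i + 1) (j + 1) with hc | hc <;>
    rw [hr, hc] <;> omega

end Diagram

section Perm

variable {n : ℕ} (u : Equiv.Perm (Fin n))

lemma pval_fin (x : Fin n) : pval u (x + 1) = u x + 1 := by
  simp [pval, x.isLt]

lemma exists_fin_of_mem {a : ℕ} (h1 : 1 ≤ a) (h2 : a ≤ n) : ∃ x : Fin n, a = x + 1 :=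
  ⟨⟨a - 1, by omega⟩, by simp; omega⟩

lemma pval_mem {a : ℕ} (h1 : 1 ≤ a) (h2 : a ≤ n) : 1 ≤ pval u a ∧ pval u a ≤ n := by
  obtain ⟨x, rfl⟩ := exists_fin_of_mem h1 h2
  rw [pval_fin]
  omega

lemma pval_inv_pval {a : ℕ} (h1 : 1 ≤ a) (h2 : a ≤ n) : pval u⁻¹ (pval u a) = a := by
  obtain ⟨x, rfl⟩ := exists_fin_of_mem h1 h2
  rw [pval_fin, pval_fin, Equiv.Perm.coe_inv, Equiv.symm_apply_apply]

lemma pval_pval_inv {b : ℕ} (h1 : 1 ≤ b) (h2 : b ≤ n) : pval u (pval u⁻¹ b) = b := by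
  simpa using pval_inv_pval u⁻¹ h1 h2

lemma pval_injOn {a a' : ℕ} (h1 : 1 ≤ a) (h2 : a ≤ n) (h1' : 1 ≤ a') (h2' : a' ≤ n)
    (h : pval u a = pval u a') : a = a' := by
  rw [← pval_inv_pval u h1 h2, h, pval_inv_pval u h1' h2']

lemma Equiv.Perm.ext_of_pval {u v : Equiv.Perm (Fin n)}
    (h : ∀ a, 1 ≤ a → a ≤ n → pval u a = pval v a) : u = v := by
  ext x
  simpa [pval_fin] using h (x + 1) (by omega) (by omega)

lemma entry1_permMatrix (x : Fin n) (l : ℕ) :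
    entry1 (permMatrix u) (x + 1) l = if pval u (x + 1) = l then 1 else 0 := by
  rw [pval_fin]
  by_cases hl : 1 ≤ l ∧ l ≤ n
  · obtain ⟨y, rfl⟩ := exists_fin_of_mem hl.1 hl.2
    simp [entry1, permMatrix, x.isLt, y.isLt, Fin.ext_iff]
  · rw [entry1_eq_zero_of_col _ _ hl, if_neg]
    omega

lemma rowPartial_permMatrix (i j : ℕ) :
    rowPartial (permMatrix u) i j = if 1 ≤ i ∧ i ≤ n ∧ pval u i ≤ j then 1 else 0 := by
  by_cases hi : 1 ≤ i ∧ i ≤ n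
  · obtain ⟨x, rfl⟩ := exists_fin_of_mem hi.1 hi.2
    simp only [rowPartial, entry1_permMatrix, sum_ite_eq, mem_Icc, pval_fin]
    simp [hi]
  · rw [if_neg (by tauto)]
    exact sum_eq_zero fun l _ => entry1_eq_zero_of_row _ hi l

end Perm

section BiGrassmannian

variable {n i j r : ℕ}

lemma biGrFun_mem (hri : r < i) (hrj : r < j) (hn : i + j - r ≤ n) {a : ℕ} (h1 : 1 ≤ a)
    (h2 : a ≤ n) : 1 ≤ biGrFun i j r a ∧ biGrFun i j r a ≤ n := by
  simp only [biGrFun]; split_ifs <;> omega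

lemma biGrFun_biGrFun (hri : r < i) (hrj : r < j) (a : ℕ) :
    biGrFun j i r (biGrFun i j r a) = a := by
  simp only [biGrFun]; split_ifs <;> omega

noncomputable def biGrPerm (n : ℕ) (hri : r < i) (hrj : r < j) (hn : i + j - r ≤ n) :
    Equiv.Perm (Fin n) :=
  Equiv.ofBijective
    (fun x => ⟨biGrFun i j r (x + 1) - 1, by
      have := biGrFun_mem hri hrj hn (a := x + 1) (by omega) (by omega); omega⟩)
    (Finite.injective_iff_bijective.1 fun x y hxy => by
      have hx := biGrFun_mem hri hrj hn (a := x + 1) (by omega) (by omega)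
      have hy := biGrFun_mem hri hrj hn (a := y + 1) (by omega) (by omega)
      have h : biGrFun i j r (x + 1) = biGrFun i j r (y + 1) := by
        simp only [Fin.mk.injEq] at hxy; omega
      have := congrArg (biGrFun j i r) h
      rw [biGrFun_biGrFun hri hrj, biGrFun_biGrFun hri hrj] at this
      exact Fin.ext (by omega))

lemma isBiGrPerm_biGrPerm (hri : r < i) (hrj : r < j) (hn : i + j - r ≤ n) :
    IsBiGrPerm n i j r (biGrPerm n hri hrj hn) := by
  intro a h1 h2
  obtain ⟨x, rfl⟩ := exists_fin_of_mem h1 h2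
  have := biGrFun_mem hri hrj hn (a := x + 1) h1 h2
  rw [pval_fin]
  simp only [biGrPerm, Equiv.ofBijective_apply]
  omega

def biGrRank (i j r a b : ℕ) : ℕ :=
  min (min a b) (r + (a - i) + (b - j))

namespace IsBiGrPerm

variable {u : Equiv.Perm (Fin n)}

lemma inv (hri : r < i) (hrj : r < j) (hn : i + j - r ≤ n) (hu : IsBiGrPerm n i j r u) :
    IsBiGrPerm n j i r u⁻¹ := by
  intro b h1 h2
  have hb := biGrFun_mem hrj hri (by omega) h1 h2
  rw [← pval_inv_pval u hb.1 hb.2, hu _ hb.1 hb.2, biGrFun_biGrFun hrj hri]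

lemma existsUnique_hasDescentAt (hri : r < i) (hrj : r < j) (hn : i + j - r ≤ n)
    (hu : IsBiGrPerm n i j r u) : ∃! d, HasDescentAt u d := by
  refine ⟨i, ⟨by omega, by omega, ?_⟩, fun d ⟨hd1, hd2, hd3⟩ => ?_⟩
  · rw [hu i (by omega) (by omega), hu (i + 1) (by omega) (by omega)]
    simp only [biGrFun]
    split_ifs <;> omega
  · rw [hu d (by omega) (by omega), hu (d + 1) (by omega) (by omega)] at hd3
    simp only [biGrFun] at hd3
    split_ifs at hd3 <;> omega

lemma isBiGrassmannian (hri : r < i) (hrj : r < j) (hn : i + j - r ≤ n)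
    (hu : IsBiGrPerm n i j r u) : IsBiGrassmannian u :=
  ⟨hu.existsUnique_hasDescentAt hri hrj hn,
    (hu.inv hri hrj hn).existsUnique_hasDescentAt hrj hri (by omega)⟩

lemma eq {v : Equiv.Perm (Fin n)} (hu : IsBiGrPerm n i j r u) (hv : IsBiGrPerm n i j r v) :
    u = v :=
  Equiv.Perm.ext_of_pval fun a h1 h2 => (hu a h1 h2).trans (hv a h1 h2).symm

lemma cornerSum_permMatrix (hri : r < i) (hrj : r < j) (hu : IsBiGrPerm n i j r u) {a : ℕ}
    (ha : a ≤ n) (b : ℕ) :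
    cornerSum (permMatrix u) a b = biGrRank i j r a b := by
  induction a with
  | zero => simp [cornerSum_zero_left, biGrRank]
  | succ m ih =>
    rw [cornerSum_succ_left, ih (by omega), rowPartial_permMatrix, hu (m + 1) (by omega) ha]
    simp only [biGrRank, biGrFun]
    split_ifs <;> omega

lemma permLEASM_iff {A : Matrix (Fin n) (Fin n) ℤ} (hA : IsASM A) (hri : r < i) (hrj : r < j)
    (hn : i + j - r ≤ n) (hu : IsBiGrPerm n i j r u) :
    PermLEASM u A ↔ cornerSum A i j ≤ r := by
  constructor
  · intro h
    simpa [hu.cornerSum_permMatrix hri hrj (show i ≤ n by omega), biGrRank, hri.le, hrj.le]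
      using h i j
  · intro h a b
    rw [← cornerSum_min_left, ← cornerSum_min_left (permMatrix u),
      hu.cornerSum_permMatrix hri hrj (min_le_right a n)]
    have := hA.isPartialASM.cornerSum_le_add (min a n) b i j
    have := hA.isPartialASM.cornerSum_le_left (min a n) b
    have := hA.isPartialASM.cornerSum_le_right (min a n) b
    simp only [biGrRank]
    omega

lemma bruhatLE_iff {i' j' r' : ℕ} {v : Equiv.Perm (Fin n)} (hri : r < i) (hrj : r < j)
    (hn : i + j - r ≤ n) (hu : IsBiGrPerm n i j r u) (hri' : r' < i') (hrj' : r' < j')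
    (hv : IsBiGrPerm n i' j' r' v) :
    BruhatLE u v ↔ r' + (i - i') + (j - j') ≤ r := by
  constructor
  · intro h
    have := h i j
    rw [hu.cornerSum_permMatrix hri hrj (by omega), hv.cornerSum_permMatrix hri' hrj' (by omega)]
      at this
    simp only [biGrRank] at this
    omega
  · intro h a b
    rw [← cornerSum_min_left, ← cornerSum_min_left (permMatrix u),
      hu.cornerSum_permMatrix hri hrj (min_le_right a n),
      hv.cornerSum_permMatrix hri' hrj' (min_le_right a n)]
    simp only [biGrRank]
    omega

end IsBiGrPerm

end BiGrassmannian

section Classification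

variable {n : ℕ} {u : Equiv.Perm (Fin n)}

lemma pval_lt_pval_succ {a : ℕ} (h : ¬HasDescentAt u a) (h1 : 1 ≤ a) (h2 : a < n) :
    pval u a < pval u (a + 1) := by
  rcases lt_trichotomy (pval u a) (pval u (a + 1)) with hlt | heq | hgt
  · exact hlt
  · exact absurd (pval_injOn u h1 h2.le (by omega) h2 heq) (by omega)
  · exact absurd ⟨h1, h2, hgt⟩ h

lemma pval_add_sub_le {s a : ℕ} (hno : ∀ x, s ≤ x → x < a → ¬HasDescentAt u x) (h1 : 1 ≤ s)
    (hsa : s ≤ a) (ha : a ≤ n) : pval u s + (a - s) ≤ pval u a := by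
  induction a, hsa using Nat.le_induction with
  | base => simp
  | succ m hsm ih =>
    have := pval_lt_pval_succ (hno m hsm (by omega)) (by omega) (by omega)
    have := ih (fun x hx hxm => hno x hx (by omega)) (by omega)
    omega

lemma pval_eq_self_of_mapsTo {s t : ℕ} (hno : ∀ x, s ≤ x → x < t → ¬HasDescentAt u x)
    (h1 : 1 ≤ s) (ht : t ≤ n) (hmaps : ∀ x, s ≤ x → x ≤ t → s ≤ pval u x ∧ pval u x ≤ t)
    {x : ℕ} (hsx : s ≤ x) (hxt : x ≤ t) : pval u x = x := by
  have hlow := pval_add_sub_le (fun y hy hyx => hno y hy (by omega)) h1 hsx (by omega)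
  have hupp := pval_add_sub_le (fun y hy hyt => hno y (by omega) hyt) (by omega) hxt ht
  have := hmaps s le_rfl (by omega)
  have := hmaps t (by omega) le_rfl
  omega

lemma mem_iff_le_card_filter {P : ℕ → Prop} [DecidablePred P] {m : ℕ}
    (hP : ∀ a a', 1 ≤ a → a ≤ a' → a' ≤ m → P a' → P a) {a : ℕ} (h1 : 1 ≤ a) (h2 : a ≤ m) :
    P a ↔ a ≤ ((Icc 1 m).filter P).card := by
  constructor
  · intro hPa
    have hsub : Icc 1 a ⊆ (Icc 1 m).filter P := fun x hx => by
      simp only [mem_Icc, mem_filter] at hx ⊢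
      exact ⟨⟨hx.1, by omega⟩, hP x a hx.1 hx.2 h2 hPa⟩
    simpa using card_le_card hsub
  · intro hle
    by_contra hPa
    have hsub : (Icc 1 m).filter P ⊆ Icc 1 (a - 1) := fun x hx => by
      simp only [mem_Icc, mem_filter] at hx ⊢
      exact ⟨hx.1.1, by_contra fun hxa => hPa (hP a x h1 (by omega) hx.1.2 hx.2)⟩
    have := card_le_card hsub
    simp only [Nat.card_Icc] at this
    omega

variable (u) in
/-- The corner sum `r_u(d,e)` of a permutation, as a count. -/
def permRank (d e : ℕ) : ℕ :=
  ((Icc 1 d).filter (fun a => pval u a ≤ e)).card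

lemma permRank_inv {d e : ℕ} (hd : d ≤ n) (he : e ≤ n) : permRank u⁻¹ e d = permRank u d e := by
  refine card_bij' (fun b _ => pval u⁻¹ b) (fun a _ => pval u a) ?_ ?_ ?_ ?_
  · intro b hb
    simp only [mem_filter, mem_Icc] at hb ⊢
    have := pval_mem u⁻¹ hb.1.1 (by omega)
    exact ⟨⟨this.1, hb.2⟩, by rw [pval_pval_inv u hb.1.1 (by omega)]; exact hb.1.2⟩
  · intro a ha
    simp only [mem_filter, mem_Icc] at ha ⊢
    have := pval_mem u ha.1.1 (by omega)
    exact ⟨⟨this.1, ha.2⟩, by rw [pval_inv_pval u ha.1.1 (by omega)]; exact ha.1.2⟩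
  · intro b hb
    simp only [mem_filter, mem_Icc] at hb
    exact pval_pval_inv u hb.1.1 (by omega)
  · intro a ha
    simp only [mem_filter, mem_Icc] at ha
    exact pval_inv_pval u ha.1.1 (by omega)

def HasUniqueDescentAt (u : Equiv.Perm (Fin n)) (d : ℕ) : Prop :=
  HasDescentAt u d ∧ ∀ y, HasDescentAt u y → y = d

variable {d e : ℕ}

lemma HasUniqueDescentAt.inv_inv (hd : HasUniqueDescentAt u d) : HasUniqueDescentAt u⁻¹⁻¹ d := by
  rwa [_root_.inv_inv]

lemma pval_le_iff_le_permRank (hd : HasUniqueDescentAt u d) {a : ℕ} (h1 : 1 ≤ a) (had : a ≤ d) :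
    pval u a ≤ e ↔ a ≤ permRank u d e := by
  refine mem_iff_le_card_filter (P := (pval u · ≤ e)) (fun a a' h1 haa' ha'd hle => ?_) h1 had
  have := pval_add_sub_le (fun x _ hx hdesc => by have := hd.2 x hdesc; omega) h1 haa'
    (ha'd.trans hd.1.2.1.le)
  omega

lemma pval_inv_le_iff_le_permRank (hd : HasUniqueDescentAt u d) (he : HasUniqueDescentAt u⁻¹ e)
    {b : ℕ} (h1 : 1 ≤ b) (hbe : b ≤ e) : pval u⁻¹ b ≤ d ↔ b ≤ permRank u d e := by
  rw [← permRank_inv hd.1.2.1.le he.1.2.1.le]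
  exact pval_le_iff_le_permRank he h1 hbe

lemma permRank_lt (hd : HasUniqueDescentAt u d) (he : HasUniqueDescentAt u⁻¹ e) :
    permRank u d e < d := by
  obtain ⟨hd1, hdn, hdesc⟩ := hd.1
  have hle : permRank u d e ≤ d := by simpa [permRank] using card_filter_le (Icc 1 d) (pval u · ≤ e)
  by_contra hge
  have hpd := (pval_le_iff_le_permRank (e := e) hd hd1 le_rfl).2 (by omega)
  have hd' := pval_mem u hd1 hdn.le
  have hd1' := pval_mem u (a := d + 1) (by omega) hdn
  have hpos := (pval_inv_le_iff_le_permRank hd he hd'.1 hpd).1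
    (by rw [pval_inv_pval u hd1 hdn.le])
  have hneg := (pval_inv_le_iff_le_permRank hd he hd1'.1 (by omega)).not.1
    (by rw [pval_inv_pval u (by omega) hdn]; omega)
  omega

lemma pval_eq_self_of_le_permRank (hd : HasUniqueDescentAt u d)
    (he : HasUniqueDescentAt u⁻¹ e) {a : ℕ} (h1 : 1 ≤ a) (ha : a ≤ permRank u d e) :
    pval u a = a := by
  have hr := permRank_lt hd he
  have hdn := hd.1.2.1
  refine pval_eq_self_of_mapsTo (fun x _ hx hdesc => by have := hd.2 x hdesc; omega) le_rfl
    (by omega) (fun x hx1 hxr => ?_) h1 ha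
  have hx := pval_mem u hx1 (by omega)
  have hxe := (pval_le_iff_le_permRank hd hx1 (by omega)).2 hxr
  refine ⟨hx.1, (pval_inv_le_iff_le_permRank hd he hx.1 hxe).1 ?_⟩
  rw [pval_inv_pval u hx1 (by omega)]
  omega

lemma permRank_lt_right (hd : HasUniqueDescentAt u d) (he : HasUniqueDescentAt u⁻¹ e) :
    permRank u d e < e := by
  simpa [permRank_inv hd.1.2.1.le he.1.2.1.le] using permRank_lt he hd.inv_inv

lemma pval_eq_add_of_permRank_lt (hd : HasUniqueDescentAt u d)
    (he : HasUniqueDescentAt u⁻¹ e) {a : ℕ} (hra : permRank u d e < a) (had : a ≤ d) :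
    pval u a = a + (e - permRank u d e) := by
  set r := permRank u d e
  have hre := permRank_lt_right hd he
  have hdn := hd.1.2.1
  have hen := he.1.2.1
  have hgt := (pval_le_iff_le_permRank (e := e) hd (by omega) had).not.2 (by omega)
  have hbase := (pval_le_iff_le_permRank (e := e) hd (a := r + 1) (by omega) (by omega)).not.2
    (by omega)
  have hlow := pval_add_sub_le (u := u) (fun x _ hx hdesc => by have := hd.2 x hdesc; omega)
    (s := r + 1) (by omega) hra (by omega)
  have hbase' : r + 1 ≤ pval u⁻¹ (e + 1) := by
    by_contra hlt
    have hb := pval_mem u⁻¹ (a := e + 1) (by omega) (by omega)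
    have := pval_eq_self_of_le_permRank hd he hb.1 (by omega)
    rw [pval_pval_inv u (by omega) (by omega)] at this
    omega
  have hupp := pval_add_sub_le (u := u⁻¹) (fun x hx _ hdesc => by have := he.2 x hdesc; omega)
    (s := e + 1) (by omega) (by omega) (pval_mem u (a := a) (by omega) (by omega)).2
  rw [pval_inv_pval u (by omega) (by omega)] at hupp
  omega

lemma pval_eq_biGrFun (hd : HasUniqueDescentAt u d) (he : HasUniqueDescentAt u⁻¹ e) {a : ℕ}
    (h1 : 1 ≤ a) (ha : a ≤ d + e - permRank u d e) :
    pval u a = biGrFun d e (permRank u d e) a := by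
  have hrd := permRank_lt hd he
  have hre := permRank_lt_right hd he
  have hen := he.1.2.1
  have hrank := permRank_inv (u := u) hd.1.2.1.le hen.le
  unfold biGrFun
  split_ifs with c1 c2
  · exact pval_eq_self_of_le_permRank hd he h1 c1
  · exact pval_eq_add_of_permRank_lt hd he (by omega) c2
  · have hinv := pval_eq_add_of_permRank_lt he hd.inv_inv (a := a - d + permRank u d e)
      (by rw [hrank]; omega) (by omega)
    have hval := pval_pval_inv u (b := a - d + permRank u d e) (by omega) (by omega)
    rw [hinv, hrank, (by omega : a - d + permRank u d e + (d - permRank u d e) = a)] at hval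
    omega

theorem IsBiGrassmannian.exists_isBiGrPerm (hbg : IsBiGrassmannian u) :
    ∃ i j r, r < i ∧ r < j ∧ i + j - r ≤ n ∧ IsBiGrPerm n i j r u := by
  obtain ⟨⟨d, (hd : HasUniqueDescentAt u d)⟩, ⟨e, (he : HasUniqueDescentAt u⁻¹ e)⟩⟩ := hbg
  have hrd := permRank_lt hd he
  have hre := permRank_lt_right hd he
  have hdn := hd.1.2.1
  have hn : d + e - permRank u d e ≤ n := by
    have := pval_eq_add_of_permRank_lt hd he hrd le_rfl
    have := pval_mem u (a := d) (by omega) (by omega)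
    omega
  refine ⟨d, e, permRank u d e, hrd, hre, hn, fun a h1 h2 => ?_⟩
  by_cases ha : a ≤ d + e - permRank u d e
  · exact pval_eq_biGrFun hd he h1 ha
  rw [biGrFun, if_neg (by omega), if_neg (by omega), if_neg ha]
  refine pval_eq_self_of_mapsTo (s := d + e - permRank u d e + 1)
    (fun x hx _ hdesc => by have := hd.2 x hdesc; omega) (by omega) le_rfl
    (fun x hx hxn => ⟨?_, (pval_mem u (by omega) hxn).2⟩) (by omega) h2
  -- `u⁻¹` maps `[1, d + e - r]` into itself, hence `u` maps the complement into itself.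
  by_contra hlt
  have hx := pval_mem u (a := x) (by omega) hxn
  have hinv := pval_eq_biGrFun he hd.inv_inv hx.1 (by rw [permRank_inv hdn.le he.1.2.1.le]; omega)
  rw [permRank_inv hdn.le he.1.2.1.le, pval_inv_pval u (by omega) hxn] at hinv
  unfold biGrFun at hinv
  split_ifs at hinv <;> omega

end Classification

section Essential

variable {n : ℕ} {A : Matrix (Fin n) (Fin n) ℤ} {i j : ℕ}

lemma IsASM.cornerSum_lt_of_inDiagram (hA : IsASM A) (hD : InDiagram A i j) :
    (cornerSum A i j).toNat < i ∧ (cornerSum A i j).toNat < j ∧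
      i + j - (cornerSum A i j).toNat ≤ n := by
  obtain ⟨hi1, hin, hj1, hjn, hrow, hcol⟩ := (hA.inDiagram_iff i j).1 hD
  have := hA.isPartialASM.cornerSum_le_left (i - 1) j
  have := hA.isPartialASM.cornerSum_le_right i (j - 1)
  have := hA.le_cornerSum hin hjn
  omega

lemma IsASM.params_eq_of_inEss (hA : IsASM A) (hE : InEss A i j) {i' j' r' : ℕ} (hi' : i' ≤ n)
    (hj' : j' ≤ n) (hle : cornerSum A i' j' ≤ r')
    (hdom : r' + (i - i') + (j - j') ≤ (cornerSum A i j).toNat) :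
    i' = i ∧ j' = j ∧ r' = (cornerSum A i j).toNat := by
  obtain ⟨hD, hDi, hDj⟩ := hE
  rw [hA.inDiagram_iff] at hD hDi hDj
  obtain ⟨hi1, hin, hj1, hjn, hrow, hcol⟩ := hD
  have hP := hA.isPartialASM
  have := hP.cornerSum_nonneg i j
  have hii : i ≤ i' := by
    by_contra
    have := hP.cornerSum_le_add (i - 1) j i' j'
    omega
  have hjj : j ≤ j' := by
    by_contra
    have := hP.cornerSum_le_add i (j - 1) i' j'
    omega
  have := hP.cornerSum_mono hii hjj
  refine ⟨?_, ?_, by omega⟩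
  · by_contra
    have := hP.cornerSum_mono (show i + 1 ≤ i' by omega) hjj
    have := hP.cornerSum_mono (show i ≤ i + 1 by omega) (le_refl j)
    have := hP.cornerSum_mono (show i ≤ i + 1 by omega) (le_refl (j - 1))
    have := hP.cornerSum_mono (le_refl (i + 1)) (show j - 1 ≤ j by omega)
    simp only [add_tsub_cancel_right] at hDi
    omega
  · by_contra
    have := hP.cornerSum_mono hii (show j + 1 ≤ j' by omega)
    have := hP.cornerSum_mono (le_refl i) (show j ≤ j + 1 by omega)
    have := hP.cornerSum_mono (le_refl (i - 1)) (show j ≤ j + 1 by omega)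
    have := hP.cornerSum_mono (show i - 1 ≤ i by omega) (le_refl (j + 1))
    simp only [add_tsub_cancel_right] at hDj
    omega

variable {r : ℕ} {u : Equiv.Perm (Fin n)}

lemma biGr_params_eq_of_maximal (hA : IsASM A) (hri : r < i) (hrj : r < j) (hn : i + j - r ≤ n)
    (hu : IsBiGrPerm n i j r u)
    (hmax : ∀ v, (IsBiGrassmannian v ∧ PermLEASM v A) → BruhatLE u v → v = u)
    (i' j' r' : ℕ) (hri' : r' < i') (hrj' : r' < j') (hn' : i' + j' - r' ≤ n)
    (hle : cornerSum A i' j' ≤ r') (hdom : r' + (i - i') + (j - j') ≤ r) :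
    i' = i ∧ j' = j ∧ r' = r := by
  have hv := isBiGrPerm_biGrPerm hri' hrj' hn'
  have hvu := hmax _ ⟨hv.isBiGrassmannian hri' hrj' hn', (hv.permLEASM_iff hA hri' hrj' hn').2 hle⟩
    ((hu.bruhatLE_iff hri hrj hn hri' hrj' hv).2 hdom)
  rw [hvu] at hv
  have := (hv.bruhatLE_iff hri' hrj' hn' hri hrj hu).1 fun _ _ => le_rfl
  omega

lemma inDiagram_of_maximal (hA : IsASM A) (hri : r < i) (hrj : r < j) (hn : i + j - r ≤ n)
    (hu : IsBiGrPerm n i j r u) (hle : PermLEASM u A)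
    (hmax : ∀ v, (IsBiGrassmannian v ∧ PermLEASM v A) → BruhatLE u v → v = u) :
    InDiagram A i j ∧ cornerSum A i j = r := by
  have hP := hA.isPartialASM
  have compete := biGr_params_eq_of_maximal hA hri hrj hn hu hmax
  have := (hu.permLEASM_iff hA hri hrj hn).1 hle
  have := hP.cornerSum_nonneg i j
  have := hA.le_cornerSum (show i ≤ n by omega) (show j ≤ n by omega)
  have hr : cornerSum A i j = r := by
    have := compete i j (cornerSum A i j).toNat (by omega) (by omega) (by omega) (by omega)
      (by omega)
    omega
  have hrow : cornerSum A (i - 1) j = cornerSum A i j := by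
    by_contra
    have := hP.cornerSum_mono (show i - 1 ≤ i by omega) (le_refl j)
    have := hP.cornerSum_le_add i j (i - 1) j
    have := hP.cornerSum_nonneg (i - 1) j
    have := compete (i - 1) j (r - 1) (by omega) (by omega) (by omega) (by omega) (by omega)
    omega
  have hcol : cornerSum A i (j - 1) = cornerSum A i j := by
    by_contra
    have := hP.cornerSum_mono (le_refl i) (show j - 1 ≤ j by omega)
    have := hP.cornerSum_le_add i j i (j - 1)
    have := hP.cornerSum_nonneg i (j - 1)
    have := compete i (j - 1) (r - 1) (by omega) (by omega) (by omega) (by omega) (by omega)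
    omega
  exact ⟨(hA.inDiagram_iff i j).2 ⟨by omega, by omega, by omega, by omega, hrow, hcol⟩, hr⟩

lemma inEss_of_maximal (hA : IsASM A) (hri : r < i) (hrj : r < j) (hn : i + j - r ≤ n)
    (hu : IsBiGrPerm n i j r u) (hle : PermLEASM u A)
    (hmax : ∀ v, (IsBiGrassmannian v ∧ PermLEASM v A) → BruhatLE u v → v = u) :
    InEss A i j ∧ cornerSum A i j = r := by
  obtain ⟨hD, hr⟩ := inDiagram_of_maximal hA hri hrj hn hu hle hmax
  have compete := biGr_params_eq_of_maximal hA hri hrj hn hu hmax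
  refine ⟨⟨hD, fun hD' => ?_, fun hD' => ?_⟩, hr⟩
  · obtain ⟨-, hin, -, hjn, hrow, -⟩ := (hA.inDiagram_iff _ _).1 hD'
    simp only [add_tsub_cancel_right] at hrow
    have := hA.le_cornerSum hin hjn
    have := compete (i + 1) j r (by omega) (by omega) (by omega) (by omega) (by omega)
    omega
  · obtain ⟨-, hin, -, hjn, -, hcol⟩ := (hA.inDiagram_iff _ _).1 hD'
    simp only [add_tsub_cancel_right] at hcol
    have := hA.le_cornerSum hin hjn
    have := compete i (j + 1) r (by omega) (by omega) (by omega) (by omega) (by omega)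
    omega

end Essential

/-- For `A ∈ ASM(n)`, the set `biGr(A)` of maximal elements (in
Bruhat order) of the set of biGrassmannian permutations `u ≤ A` equals
`{[i, j, r_A(i,j)]_b : (i,j) ∈ Ess(A)}`. -/
theorem stmt7 {n : ℕ} (A : Matrix (Fin n) (Fin n) ℤ) (hA : IsASM A) :
    {u : Equiv.Perm (Fin n) |
      (IsBiGrassmannian u ∧ PermLEASM u A) ∧
      ∀ v : Equiv.Perm (Fin n),
        (IsBiGrassmannian v ∧ PermLEASM v A) → BruhatLE u v → v = u}
    = {u : Equiv.Perm (Fin n) |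
        ∃ i j : ℕ, InEss A i j ∧
          IsBiGrPerm n i j (cornerSum A i j).toNat u} := by
  ext u
  constructor
  · rintro ⟨⟨hbg, hle⟩, hmax⟩
    obtain ⟨i, j, r, hri, hrj, hn, hu⟩ := hbg.exists_isBiGrPerm
    obtain ⟨hE, hr⟩ := inEss_of_maximal hA hri hrj hn hu hle hmax
    exact ⟨i, j, hE, by rwa [hr, Int.toNat_natCast]⟩
  · rintro ⟨i, j, hE, hu⟩
    obtain ⟨hri, hrj, hn⟩ := hA.cornerSum_lt_of_inDiagram hE.1
    refine ⟨⟨hu.isBiGrassmannian hri hrj hn,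
      (hu.permLEASM_iff hA hri hrj hn).2 (Int.self_le_toNat _)⟩, fun v ⟨hvbg, hvle⟩ huv => ?_⟩
    obtain ⟨i', j', r', hri', hrj', hn', hv⟩ := hvbg.exists_isBiGrPerm
    obtain ⟨rfl, rfl, rfl⟩ := hA.params_eq_of_inEss hE (by omega) (by omega)
      ((hv.permLEASM_iff hA hri' hrj' hn').1 hvle) ((hu.bruhatLE_iff hri hrj hn hri' hrj' hv).1 huv)
    exact hv.eq hu
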